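/- Let G be a simple graph in which every edge lies in a 3-clique, and let C(G) be the associated monotone 1-in-3 instance. Then an assignment ν : V × {0,1,2} → Bool 1-in-3 satisfies C(G) if and only if there is a proper 3-colouring c of G such that for all vertices i and colours j, ν(i,j) = true ⟺ c(i) = j. In particular, C(G) is 1-in-3 satisfiable if and only if G is 3-colourable. -/

import Mathlib

/-- Exactly one of three Boolean values is `true`. -/
def oneOf3 (a b c : Bool) : Prop :=
  (a = true ∧ b = false ∧ c = false) ∨ (a = false ∧ b = true ∧ c = false) ∨
  (a = false ∧ b = false ∧ c = true)

/-- `ν` 1-in-3 satisfies the monotone 1-in-3 instance `C(G)`: for each vertex `i` exactly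
one of the variables `(i,0), (i,1), (i,2)` is true, and for each 3-clique `{i₁,i₂,i₃}` of
`G` and each colour `j` exactly one of `(i₁,j), (i₂,j), (i₃,j)` is true. -/
def CSat {V : Type} (G : SimpleGraph V) (ν : V × Fin 3 → Bool) : Prop :=
  (∀ i : V, oneOf3 (ν (i, 0)) (ν (i, 1)) (ν (i, 2))) ∧
  (∀ i₁ i₂ i₃ : V, G.Adj i₁ i₂ → G.Adj i₁ i₃ → G.Adj i₂ i₃ →
    ∀ j : Fin 3, oneOf3 (ν (i₁, j)) (ν (i₂, j)) (ν (i₃, j)))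

/-!
A satisfying assignment picks one colour per vertex (vertex clauses), and that colouring is
proper because an edge `uv` lies in a triangle `uvw`, whose clause for the common colour of `u`
and `v` would otherwise have two true variables. Conversely, a proper 3-colouring is injective
on every triangle, hence a bijection onto `Fin 3`, so each colour occurs exactly once there.
-/

theorem oneOf3_iff_existsUnique (f : Fin 3 → Bool) :
    oneOf3 (f 0) (f 1) (f 2) ↔ ∃! k, f k = true := by
  unfold oneOf3
  cases h0 : f 0 <;> cases h1 : f 1 <;> cases h2 : f 2 <;>
    simp [ExistsUnique, Fin.exists_fin_succ, Fin.forall_fin_succ, h0, h1, h2]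

section

variable {V : Type} {G : SimpleGraph V} {ν : V × Fin 3 → Bool}

theorem CSat.exists_colouring (h : CSat G ν) :
    ∃ c : V → Fin 3, ∀ i j, ν (i, j) = true ↔ c i = j := by
  have hvertex (i : V) : ∃ c : Fin 3, ∀ j, ν (i, j) = true ↔ c = j := by
    obtain ⟨c, hc, huniq⟩ := (oneOf3_iff_existsUnique fun j => ν (i, j)).1 (h.1 i)
    exact ⟨c, fun j => ⟨fun hj => (huniq j hj).symm, fun hj => hj ▸ hc⟩⟩
  choose c hc using hvertex
  exact ⟨c, hc⟩

theorem CSat.colouring_ne_of_triangle (h : CSat G ν) {c : V → Fin 3}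
    (hc : ∀ i j, ν (i, j) = true ↔ c i = j) {u v w : V} (huv : G.Adj u v) (huw : G.Adj u w)
    (hvw : G.Adj v w) : c u ≠ c v := by
  intro hcol
  obtain ⟨k, -, huniq⟩ := (oneOf3_iff_existsUnique fun k => ν (![u, v, w] k, c v)).1
    (h.2 u v w huv huw hvw (c v))
  have hu : 0 = k := huniq 0 ((hc u (c v)).2 hcol)
  have hv : 1 = k := huniq 1 ((hc v (c v)).2 rfl)
  exact absurd (hu.trans hv.symm) (by decide)

theorem cSat_of_colouring {c : V → Fin 3} (hproper : ∀ u v : V, G.Adj u v → c u ≠ c v)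
    (hc : ∀ i j, ν (i, j) = true ↔ c i = j) : CSat G ν := by
  refine ⟨fun i => (oneOf3_iff_existsUnique fun j => ν (i, j)).2 ?_,
    fun i₁ i₂ i₃ h₁₂ h₁₃ h₂₃ j =>
      (oneOf3_iff_existsUnique fun k => ν (![i₁, i₂, i₃] k, j)).2 ?_⟩
  · simpa only [hc] using existsUnique_eq'
  · have hinj : Function.Injective fun k => c (![i₁, i₂, i₃] k) := by
      intro k l
      fin_cases k <;> fin_cases l <;> simp [hproper _ _ h₁₂, hproper _ _ h₁₃, hproper _ _ h₂₃,
        Ne.symm (hproper _ _ h₁₂), Ne.symm (hproper _ _ h₁₃), Ne.symm (hproper _ _ h₂₃)]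
    simpa only [hc] using (Finite.injective_iff_bijective.1 hinj).existsUnique j

end

/-- For a simple graph `G` in which every edge lies in a 3-clique:
an assignment `ν` 1-in-3 satisfies `C(G)` iff it is induced by a proper 3-colouring of
`G`; in particular `C(G)` is 1-in-3 satisfiable iff `G` is 3-colourable. -/
theorem stmt_13 {V : Type} (G : SimpleGraph V)
    (htri : ∀ u v : V, G.Adj u v → ∃ w : V, G.Adj u w ∧ G.Adj v w) :
    (∀ ν : V × Fin 3 → Bool,
      CSat G ν ↔
        ∃ c : V → Fin 3, (∀ u v : V, G.Adj u v → c u ≠ c v) ∧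
          ∀ (i : V) (j : Fin 3), ν (i, j) = true ↔ c i = j) ∧
    ((∃ ν : V × Fin 3 → Bool, CSat G ν) ↔
      ∃ c : V → Fin 3, ∀ u v : V, G.Adj u v → c u ≠ c v) := by
  have hsat (ν : V × Fin 3 → Bool) : CSat G ν ↔ ∃ c : V → Fin 3,
      (∀ u v : V, G.Adj u v → c u ≠ c v) ∧ ∀ (i : V) (j : Fin 3), ν (i, j) = true ↔ c i = j := by
    refine ⟨fun h => ?_, fun ⟨c, hproper, hc⟩ => cSat_of_colouring hproper hc⟩
    obtain ⟨c, hc⟩ := h.exists_colouring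
    refine ⟨c, fun u v huv => ?_, hc⟩
    obtain ⟨w, huw, hvw⟩ := htri u v huv
    exact h.colouring_ne_of_triangle hc huv huw hvw
  refine ⟨hsat, fun ⟨ν, h⟩ => ?_, fun ⟨c, hproper⟩ => ?_⟩
  · obtain ⟨c, hproper, -⟩ := (hsat ν).1 h
    exact ⟨c, hproper⟩
  · exact ⟨fun p => decide (c p.1 = p.2), (hsat _).2 ⟨c, hproper, fun _ _ => decide_eq_true_iff⟩⟩
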